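/- If a family (z_m)_{m ∈ ℤ} of complex numbers and γ ∈ ℤ satisfy 2(m−n)·z_{m+n} = (m−n−γ)·z_n for all m, n ∈ ℤ, then z_m = 0 for all m ∈ ℤ. -/

import Mathlib

/-! If `γ ≠ 0`, taking `m = n` gives `γ z_n = 0`. If `γ = 0`, cancelling `m - n` leaves
`2 z_k = z_n` whenever `k ≠ 2n`; then `z_n = 2 z_{2n+1} = z_0`, so `z` is a constant `c`
with `2c = c`, i.e. `c = 0`. -/

theorem eq_zero_of_two_nsmul_eq {M : Type*} [AddCancelMonoid M] {z : ℤ → M}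
    (hz : ∀ k n : ℤ, k ≠ 2 * n → 2 • z k = z n) (m : ℤ) : z m = 0 := by
  have const : ∀ n, z n = z 0 := fun n => by
    rw [← hz (2 * n + 1) n (by omega), hz (2 * n + 1) 0 (by omega)]
  have h1 : z 1 + z 1 = z 1 := by
    rw [← two_nsmul, hz 1 0 (by omega), ← const]
  rw [const m, ← const 1]
  exact add_eq_left.mp h1

theorem two_mul_eq_of_ne_two_mul {R : Type*} [Ring R] [NoZeroDivisors R] [CharZero R]
    {z : ℤ → R} (h : ∀ m n : ℤ, 2 * ((m - n : ℤ) : R) * z (m + n) = ((m - n : ℤ) : R) * z n)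
    {k n : ℤ} (hk : k ≠ 2 * n) : 2 * z k = z n := by
  have hne : ((k - n - n : ℤ) : R) ≠ 0 := Int.cast_ne_zero.mpr (by omega)
  have hkn := h (k - n) n
  rw [sub_add_cancel, ← (Int.cast_commute _ 2).eq, mul_assoc] at hkn
  exact mul_left_cancel₀ hne hkn

theorem half_derivation_coeff_z
    (z : ℤ → ℂ) (γ : ℤ)
    (h : ∀ m n : ℤ, 2 * ((m - n : ℤ) : ℂ) * z (m + n)
        = ((m - n - γ : ℤ) : ℂ) * z n) :
    ∀ m : ℤ, z m = 0 := by
  intro m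
  rcases eq_or_ne γ 0 with rfl | hγ
  · simp only [sub_zero] at h
    refine eq_zero_of_two_nsmul_eq (fun k n hk => ?_) m
    rw [two_nsmul, ← two_mul]
    exact two_mul_eq_of_ne_two_mul h hk
  · simpa [hγ] using h m m
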